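/- Let 0 < σ₁ < 2, 0 < σ₂ ≤ σ₁, 0 < σ₃ < σ₁. Let 0 ≤ a ∈ C²(ℝ³) ∩ L^∞(ℝ³) and V ∈ W^{1,∞}(ℝ³; ℝ) satisfy: (Control) there exists c₀ > 0 with V₋(x) + (∇V(x)·x)₊ ≤ c₀ a(x)^{(σ₃+1)/(σ₂+1)} for all x, and (Decay of the trapping part) if σ₃ ≠ σ₂ then V₋ + (∇V·x)₊ ≲ ⟨x⟩^{−7(σ₃+1)} when σ₃ < σ₂, and V₋ + (∇V·x)₊ ≲ ⟨x⟩^{−(σ₃+1)/(σ₁+1)} when σ₃ > σ₂. Then there exist constants C₁, C₃ > 0 such that for every δ > 0 there exists C_δ > 0 with the following property: for every measurable u : ℝ³ → ℂ, ∫_{ℝ³} (∇V(x)·x)₊ ⟨x⟩^{−1} |u|^{2σ₃+2} dx + ∫_{ℝ³} V₋(x) ⟨x⟩^{−1} |u|^{2σ₃+2} dx ≤ δ C₁ ∫_{ℝ³} ⟨x⟩^{−7} |u|² dx + δ C₃ ∫_{ℝ³} ⟨x⟩^{−1} |u|^{2σ₁+2} dx + C_δ ∫_{ℝ³} a(x)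 |u|^{2σ₂+2} dx (an inequality in [0,∞]). -/

import Mathlib

open MeasureTheory ENNReal

noncomputable section

abbrev E3 := EuclideanSpace ℝ (Fin 3)

/-- The Japanese bracket `⟨x⟩ = √(1+|x|²)`. -/
def jb (x : E3) : ℝ := Real.sqrt (1 + ‖x‖ ^ 2)

/-- The trapping part of the potential: `V₋(x) + (∇V(x)·x)₊`. -/
def trapPart (V : E3 → ℝ) (x : E3) : ℝ :=
  max (-V x) 0 + max (fderiv ℝ V x x) 0

lemma jb_one_le (x : E3) : 1 ≤ jb x := by
  have h : Real.sqrt 1 ≤ Real.sqrt (1 + ‖x‖ ^ 2) :=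
    Real.sqrt_le_sqrt (by nlinarith [sq_nonneg ‖x‖])
  simpa [jb, Real.sqrt_one] using h

lemma jb_pos (x : E3) : 0 < jb x := lt_of_lt_of_le one_pos (jb_one_le x)

lemma continuous_jb : Continuous jb := by
  apply Real.continuous_sqrt.comp
  continuity

lemma trapPart_nonneg (V : E3 → ℝ) (x : E3) : 0 ≤ trapPart V x :=
  add_nonneg (le_max_right _ _) (le_max_right _ _)

lemma young_eps {X Y θ ε : ℝ} (hX : 0 ≤ X) (hY : 0 ≤ Y) (hθ : 0 < θ) (hθ1 : θ < 1)
    (hε : 0 < ε) :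
    X ^ θ * Y ^ (1 - θ) ≤ ε * X + ((1 - θ) * (θ / ε) ^ (θ / (1 - θ))) * Y := by
  have h1θ : (0:ℝ) < 1 - θ := by linarith
  set c : ℝ := (θ / ε) ^ (θ / (1 - θ)) with hc
  have hc0 : 0 < c := Real.rpow_pos_of_pos (by positivity) _
  have hone : (ε / θ) ^ θ * c ^ (1 - θ) = 1 := by
    rw [hc, ← Real.rpow_mul (by positivity), show θ / (1 - θ) * (1 - θ) = θ by field_simp,
      ← Real.mul_rpow (by positivity) (by positivity),
      show ε / θ * (θ / ε) = 1 by field_simp, Real.one_rpow]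
  have key := Real.geom_mean_le_arith_mean2_weighted hθ.le h1θ.le
    (show (0:ℝ) ≤ ε / θ * X by positivity) (show (0:ℝ) ≤ c * Y by positivity) (by ring)
  calc X ^ θ * Y ^ (1 - θ)
      = ((ε / θ) ^ θ * c ^ (1 - θ)) * (X ^ θ * Y ^ (1 - θ)) := by rw [hone, one_mul]
    _ = (ε / θ * X) ^ θ * (c * Y) ^ (1 - θ) := by
        rw [Real.mul_rpow (by positivity) hX, Real.mul_rpow hc0.le hY]; ring
    _ ≤ θ * (ε / θ * X) + (1 - θ) * (c * Y) := key
    _ = ε * X + ((1 - θ) * c) * Y := by field_simp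

lemma key {T a j s Cd c₀ E β θ w p q δ : ℝ} (α : ℝ)
    (hT : 0 ≤ T) (ha : 0 ≤ a) (hj : 1 ≤ j) (hs : 0 ≤ s) (hδ : 0 < δ)
    (hCd : 0 ≤ Cd) (hc₀ : 0 ≤ c₀) (hθ : 0 < θ) (hθ1 : θ < 1)
    (hα0 : 0 ≤ α) (hα1 : α ≤ 1)
    (h1 : T ≤ Cd * j ^ (-E)) (h2 : T ≤ c₀ * a ^ β)
    (hE : w * θ ≤ α * E + 1)
    (hexp : β * (1 - α) = 1 - θ)
    (hp : 0 < p) (hq : 0 < q) :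
    T * s ^ (θ * p + (1 - θ) * q) / j ≤
      δ * ((Cd ^ α * c₀ ^ (1 - α)) ^ (1 / θ)) * (s ^ p / j ^ w)
        + ((1 - θ) * (θ / δ) ^ (θ / (1 - θ))) * (a * s ^ q) := by
  have hj0 : (0:ℝ) < j := lt_of_lt_of_le one_pos hj
  have h1θ : (0:ℝ) < 1 - θ := by linarith
  set K : ℝ := Cd ^ α * c₀ ^ (1 - α) with hKdef
  have hK0 : 0 ≤ K := by positivity
  rcases hT.eq_or_lt with h0 | hT0
  · rw [← h0, zero_mul, zero_div]
    positivity
  have stepA : T / j ≤ K * a ^ (1 - θ) * j ^ (-(w * θ)) := by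
    have e1 : T = T ^ α * T ^ (1 - α) := by
      rw [← Real.rpow_add hT0, show α + (1 - α) = 1 by ring, Real.rpow_one]
    calc T / j = T ^ α * T ^ (1 - α) * j ^ (-(1:ℝ)) := by
          rw [← e1, Real.rpow_neg_one, div_eq_mul_inv]
      _ ≤ (Cd * j ^ (-E)) ^ α * (c₀ * a ^ β) ^ (1 - α) * j ^ (-(1:ℝ)) := by
          apply mul_le_mul_of_nonneg_right _ (by positivity)
          exact mul_le_mul (Real.rpow_le_rpow hT h1 hα0)
            (Real.rpow_le_rpow hT h2 (by linarith)) (by positivity) (by positivity)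
      _ = K * a ^ (β * (1 - α)) * j ^ (-E * α + -(1:ℝ)) := by
          rw [Real.mul_rpow hCd (by positivity), Real.mul_rpow hc₀ (by positivity),
            ← Real.rpow_mul hj0.le, ← Real.rpow_mul ha, Real.rpow_add hj0]
          ring
      _ ≤ K * a ^ (1 - θ) * j ^ (-(w * θ)) := by
          rw [hexp]
          exact mul_le_mul_of_nonneg_left
            (Real.rpow_le_rpow_of_exponent_le hj (by nlinarith)) (by positivity)
  have hXY : T * s ^ (θ * p + (1 - θ) * q) / j ≤
      (K ^ (1 / θ) * (s ^ p / j ^ w)) ^ θ * (a * s ^ q) ^ (1 - θ) := by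
    have expand : (K ^ (1 / θ) * (s ^ p / j ^ w)) ^ θ * (a * s ^ q) ^ (1 - θ)
        = K * a ^ (1 - θ) * j ^ (-(w * θ)) * s ^ (θ * p + (1 - θ) * q) := by
      rw [Real.mul_rpow (by positivity) (by positivity),
        Real.mul_rpow ha (by positivity),
        Real.div_rpow (by positivity) (by positivity),
        ← Real.rpow_mul hK0, show 1 / θ * θ = 1 by field_simp, Real.rpow_one,
        ← Real.rpow_mul hs, ← Real.rpow_mul hs, ← Real.rpow_mul hj0.le,
        Real.rpow_add' hs (by positivity), Real.rpow_neg hj0.le,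
        show p * θ = θ * p by ring, show q * (1 - θ) = (1 - θ) * q by ring]
      field_simp
    rw [expand]
    calc T * s ^ (θ * p + (1 - θ) * q) / j
        = T / j * s ^ (θ * p + (1 - θ) * q) := by ring
      _ ≤ K * a ^ (1 - θ) * j ^ (-(w * θ)) * s ^ (θ * p + (1 - θ) * q) :=
          mul_le_mul_of_nonneg_right stepA (by positivity)
  calc T * s ^ (θ * p + (1 - θ) * q) / j
      ≤ (K ^ (1 / θ) * (s ^ p / j ^ w)) ^ θ * (a * s ^ q) ^ (1 - θ) := hXY
    _ ≤ δ * (K ^ (1 / θ) * (s ^ p / j ^ w))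
          + ((1 - θ) * (θ / δ) ^ (θ / (1 - θ))) * (a * s ^ q) :=
        young_eps (by positivity) (by positivity) hθ hθ1 hδ
    _ = δ * K ^ (1 / θ) * (s ^ p / j ^ w)
          + ((1 - θ) * (θ / δ) ^ (θ / (1 - θ))) * (a * s ^ q) := by ring

lemma assemble (σ₁ σ₂ σ₃ : ℝ) (a : E3 → ℝ) (haC : Continuous a) (haNonneg : ∀ x, 0 ≤ a x)
    (V : E3 → ℝ) {C₁ C₃ Cδ δ : ℝ} (h1 : 0 ≤ δ * C₁) (h3 : 0 ≤ δ * C₃) (hCδ : 0 ≤ Cδ)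
    (hσ₁ : 0 < σ₁) (hσ₂ : 0 < σ₂)
    (hpt : ∀ x (s : ℝ), 0 ≤ s → trapPart V x * s ^ (2*σ₃+2) / jb x ≤
      δ * C₁ * (s ^ 2 / jb x ^ (7:ℕ)) + δ * C₃ * (s ^ (2*σ₁+2) / jb x)
      + Cδ * (a x * s ^ (2*σ₂+2)))
    (u : E3 → ℂ) (hu : Measurable u) :
    (∫⁻ x, ENNReal.ofReal (max (fderiv ℝ V x x) 0 * ‖u x‖ ^ (2*σ₃+2) / jb x))
      + (∫⁻ x, ENNReal.ofReal (max (-V x) 0 * ‖u x‖ ^ (2*σ₃+2) / jb x))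
    ≤ ENNReal.ofReal (δ * C₁)
          * (∫⁻ x, ENNReal.ofReal (‖u x‖ ^ 2 / jb x ^ (7:ℕ)))
      + ENNReal.ofReal (δ * C₃)
          * (∫⁻ x, ENNReal.ofReal (‖u x‖ ^ (2*σ₁+2) / jb x))
      + ENNReal.ofReal Cδ
          * ∫⁻ x, ENNReal.ofReal (a x * ‖u x‖ ^ (2*σ₂+2)) := by
  set r₁ := ENNReal.ofReal (δ * C₁)
  set r₂ := ENNReal.ofReal (δ * C₃)
  set r₃ := ENNReal.ofReal Cδ
  set G₁ : E3 → ℝ≥0∞ := fun x => ENNReal.ofReal (‖u x‖ ^ 2 / jb x ^ (7:ℕ)) with hG₁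
  set G₂ : E3 → ℝ≥0∞ := fun x => ENNReal.ofReal (‖u x‖ ^ (2*σ₁+2) / jb x) with hG₂
  set G₃ : E3 → ℝ≥0∞ := fun x => ENNReal.ofReal (a x * ‖u x‖ ^ (2*σ₂+2)) with hG₃
  have mG₁ : Measurable G₁ :=
    ((hu.norm.pow_const 2).div ((continuous_jb.pow 7).measurable)).ennreal_ofReal
  have mrpow : ∀ c : ℝ, 0 ≤ c → Measurable fun x => ‖u x‖ ^ c := fun c hc =>
    (continuous_id.rpow_const fun _ => Or.inr hc).measurable.comp hu.norm
  have mG₂ : Measurable G₂ :=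
    ((mrpow _ (by positivity)).div continuous_jb.measurable).ennreal_ofReal
  have mG₃ : Measurable G₃ :=
    (haC.measurable.mul (mrpow _ (by positivity))).ennreal_ofReal
  calc (∫⁻ x, ENNReal.ofReal (max (fderiv ℝ V x x) 0 * ‖u x‖ ^ (2*σ₃+2) / jb x))
        + (∫⁻ x, ENNReal.ofReal (max (-V x) 0 * ‖u x‖ ^ (2*σ₃+2) / jb x))
      ≤ ∫⁻ x, (ENNReal.ofReal (max (fderiv ℝ V x x) 0 * ‖u x‖ ^ (2*σ₃+2) / jb x)
          + ENNReal.ofReal (max (-V x) 0 * ‖u x‖ ^ (2*σ₃+2) / jb x)) :=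
        le_lintegral_add _ _
    _ ≤ ∫⁻ x, (r₁ * G₁ x + r₂ * G₂ x + r₃ * G₃ x) := by
        apply lintegral_mono
        intro x
        dsimp only
        have hj := (jb_pos x).le
        have e : ENNReal.ofReal (max (fderiv ℝ V x x) 0 * ‖u x‖ ^ (2*σ₃+2) / jb x)
            + ENNReal.ofReal (max (-V x) 0 * ‖u x‖ ^ (2*σ₃+2) / jb x)
            = ENNReal.ofReal (trapPart V x * ‖u x‖ ^ (2*σ₃+2) / jb x) := by
          rw [← ENNReal.ofReal_add
            (div_nonneg (mul_nonneg (le_max_right _ _) (Real.rpow_nonneg (norm_nonneg _) _)) hj)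
            (div_nonneg (mul_nonneg (le_max_right _ _) (Real.rpow_nonneg (norm_nonneg _) _)) hj)]
          congr 1
          rw [trapPart]
          ring
        have pA : 0 ≤ δ * C₁ * (‖u x‖ ^ 2 / jb x ^ (7:ℕ)) :=
          mul_nonneg h1 (div_nonneg (by positivity) (pow_nonneg (jb_pos x).le 7))
        have pB : 0 ≤ δ * C₃ * (‖u x‖ ^ (2*σ₁+2) / jb x) :=
          mul_nonneg h3 (div_nonneg (Real.rpow_nonneg (norm_nonneg _) _) (jb_pos x).le)
        have pC : 0 ≤ Cδ * (a x * ‖u x‖ ^ (2*σ₂+2)) :=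
          mul_nonneg hCδ (mul_nonneg (haNonneg x) (Real.rpow_nonneg (norm_nonneg _) _))
        rw [e, hG₁, hG₂, hG₃]
        rw [← ENNReal.ofReal_mul h1, ← ENNReal.ofReal_mul h3, ← ENNReal.ofReal_mul hCδ,
          ← ENNReal.ofReal_add pA pB, ← ENNReal.ofReal_add (add_nonneg pA pB) pC]
        exact ENNReal.ofReal_le_ofReal (hpt x _ (norm_nonneg _))
    _ = r₁ * lintegral volume G₁ + r₂ * lintegral volume G₂ + r₃ * lintegral volume G₃ := by
        rw [lintegral_add_left (by exact (mG₁.const_mul r₁).add (mG₂.const_mul r₂) :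
            Measurable fun x => r₁ * G₁ x + r₂ * G₂ x),
          lintegral_add_left (mG₁.const_mul r₁),
          lintegral_const_mul' r₁ _ ENNReal.ofReal_ne_top,
          lintegral_const_mul' r₂ _ ENNReal.ofReal_ne_top,
          lintegral_const_mul' r₃ _ ENNReal.ofReal_ne_top]

/-- Control of the unsigned trapping terms of the virial identity, as an inequality
in `[0,∞]`. -/
theorem stmt_11 (σ₁ σ₂ σ₃ : ℝ)
    (hσ₁ : 0 < σ₁) (hσ₁' : σ₁ < 2) (hσ₂ : 0 < σ₂) (hσ₂' : σ₂ ≤ σ₁)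
    (hσ₃ : 0 < σ₃) (hσ₃' : σ₃ < σ₁)
    (a : E3 → ℝ) (ha : ContDiff ℝ 2 a) (haBdd : ∃ M : ℝ, ∀ x, a x ≤ M)
    (haNonneg : ∀ x, 0 ≤ a x)
    (V : E3 → ℝ) (hV : Differentiable ℝ V) (hVbdd : ∃ M : ℝ, ∀ x, |V x| ≤ M)
    (hVgrad : ∃ M : ℝ, ∀ x, ‖fderiv ℝ V x‖ ≤ M)
    (c₀ : ℝ) (hc₀ : 0 < c₀)
    (hControl : ∀ x, trapPart V x ≤ c₀ * a x ^ ((σ₃+1)/(σ₂+1)))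
    (hDecayLt : σ₃ < σ₂ → ∃ C : ℝ, 0 < C ∧ ∀ x,
      trapPart V x ≤ C * jb x ^ (-(7*(σ₃+1))))
    (hDecayGt : σ₂ < σ₃ → ∃ C : ℝ, 0 < C ∧ ∀ x,
      trapPart V x ≤ C * jb x ^ (-((σ₃+1)/(σ₁+1)))) :
    ∃ C₁ : ℝ, 0 < C₁ ∧ ∃ C₃ : ℝ, 0 < C₃ ∧ ∀ δ : ℝ, 0 < δ → ∃ Cδ : ℝ, 0 < Cδ ∧
      ∀ u : E3 → ℂ, Measurable u →
        (∫⁻ x, ENNReal.ofReal (max (fderiv ℝ V x x) 0 * ‖u x‖ ^ (2*σ₃+2) / jb x))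
          + (∫⁻ x, ENNReal.ofReal (max (-V x) 0 * ‖u x‖ ^ (2*σ₃+2) / jb x))
        ≤ ENNReal.ofReal (δ * C₁)
              * (∫⁻ x, ENNReal.ofReal (‖u x‖ ^ 2 / jb x ^ (7:ℕ)))
          + ENNReal.ofReal (δ * C₃)
              * (∫⁻ x, ENNReal.ofReal (‖u x‖ ^ (2*σ₁+2) / jb x))
          + ENNReal.ofReal Cδ
              * ∫⁻ x, ENNReal.ofReal (a x * ‖u x‖ ^ (2*σ₂+2)) := by
  rcases lt_trichotomy σ₃ σ₂ with hlt | heq | hgt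
  · -- σ₃ < σ₂ : interpolate between ⟨x⟩⁻⁷‖u‖² and a‖u‖^{2σ₂+2}
    obtain ⟨Cd, hCdpos, hdec⟩ := hDecayLt hlt
    have hσ₂0 : σ₂ ≠ 0 := ne_of_gt hσ₂
    have hσ₃1 : (0:ℝ) < σ₃ + 1 := by linarith
    have hσ₂1 : (0:ℝ) < σ₂ + 1 := by linarith
    set θ : ℝ := (σ₂ - σ₃) / σ₂ with hθdef
    set α : ℝ := (σ₂ - σ₃) / (σ₂ * (σ₃ + 1)) with hαdef
    have hθ : 0 < θ := div_pos (by linarith) hσ₂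
    have hθ1 : θ < 1 := (div_lt_one hσ₂).mpr (by linarith)
    have hα0 : 0 ≤ α := le_of_lt (div_pos (by linarith) (mul_pos hσ₂ hσ₃1))
    have hα1 : α ≤ 1 := by
      rw [hαdef, div_le_one (mul_pos hσ₂ hσ₃1)]
      nlinarith
    have hKpos : 0 < Cd ^ α * c₀ ^ (1 - α) :=
      mul_pos (Real.rpow_pos_of_pos hCdpos _) (Real.rpow_pos_of_pos hc₀ _)
    refine ⟨(Cd ^ α * c₀ ^ (1 - α)) ^ (1/θ), Real.rpow_pos_of_pos hKpos _, 1, one_pos,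
      fun δ hδ => ⟨(1 - θ) * (θ/δ) ^ (θ/(1 - θ)),
        mul_pos (by linarith) (Real.rpow_pos_of_pos (div_pos hθ hδ) _), fun u hu => ?_⟩⟩
    apply assemble σ₁ σ₂ σ₃ a ha.continuous haNonneg V
      (le_of_lt (mul_pos hδ (Real.rpow_pos_of_pos hKpos _)))
      (le_of_lt (mul_pos hδ one_pos))
      (le_of_lt (mul_pos (by linarith) (Real.rpow_pos_of_pos (div_pos hθ hδ) _)))
      hσ₁ hσ₂ _ u hu
    intro x s hs
    have hE : (7:ℝ) * θ ≤ α * (7*(σ₃+1)) + 1 := by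
      have : α * (7*(σ₃+1)) = 7 * θ := by
        rw [hαdef, hθdef]; field_simp
      linarith
    have hexp : (σ₃+1)/(σ₂+1) * (1 - α) = 1 - θ := by
      rw [hαdef, hθdef]; field_simp; ring
    have h := key (T := trapPart V x) (a := a x) (j := jb x) (s := s) (Cd := Cd) (c₀ := c₀)
      (E := 7*(σ₃+1)) (β := (σ₃+1)/(σ₂+1)) (θ := θ) (w := 7) (p := 2) (q := 2*σ₂+2) (δ := δ) α
      (trapPart_nonneg V x) (haNonneg x) (jb_one_le x) hs hδ hCdpos.le hc₀.le hθ hθ1 hα0 hα1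
      (hdec x) (hControl x) hE hexp (by norm_num) (by linarith)
    have hrr : θ * 2 + (1 - θ) * (2*σ₂+2) = 2*σ₃+2 := by
      rw [hθdef]; field_simp; ring
    rw [hrr] at h
    rw [show (2:ℝ) = ((2:ℕ):ℝ) by norm_num, Real.rpow_natCast,
      show (7:ℝ) = ((7:ℕ):ℝ) by norm_num, Real.rpow_natCast] at h
    have t2 : 0 ≤ δ * 1 * (s ^ (2*σ₁+2) / jb x) :=
      mul_nonneg (by linarith) (div_nonneg (Real.rpow_nonneg hs _) (jb_pos x).le)
    linarith
  · -- σ₃ = σ₂ : direct control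
    subst heq
    refine ⟨1, one_pos, 1, one_pos, fun δ hδ => ⟨c₀, hc₀, fun u hu => ?_⟩⟩
    apply assemble σ₁ σ₃ σ₃ a ha.continuous haNonneg V
      (le_of_lt (mul_pos hδ one_pos)) (le_of_lt (mul_pos hδ one_pos)) hc₀.le hσ₁ hσ₃ _ u hu
    intro x s hs
    have hcon : trapPart V x ≤ c₀ * a x := by
      have h := hControl x
      rwa [div_self (by linarith : σ₃ + 1 ≠ 0), Real.rpow_one] at h
    have step : trapPart V x * s ^ (2*σ₃+2) / jb x ≤ c₀ * (a x * s ^ (2*σ₃+2)) := by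
      calc trapPart V x * s ^ (2*σ₃+2) / jb x
          ≤ trapPart V x * s ^ (2*σ₃+2) :=
            div_le_self (mul_nonneg (trapPart_nonneg V x) (Real.rpow_nonneg hs _))
              (jb_one_le x)
        _ ≤ c₀ * (a x * s ^ (2*σ₃+2)) := by
            rw [← mul_assoc]
            exact mul_le_mul_of_nonneg_right hcon (Real.rpow_nonneg hs _)
    have t1 : 0 ≤ δ * 1 * (s ^ 2 / jb x ^ (7:ℕ)) :=
      mul_nonneg (by linarith) (div_nonneg (by positivity) (pow_nonneg (jb_pos x).le 7))
    have t2 : 0 ≤ δ * 1 * (s ^ (2*σ₁+2) / jb x) :=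
      mul_nonneg (by linarith) (div_nonneg (Real.rpow_nonneg hs _) (jb_pos x).le)
    linarith
  · -- σ₂ < σ₃ : interpolate between ⟨x⟩⁻¹‖u‖^{2σ₁+2} and a‖u‖^{2σ₂+2}
    obtain ⟨Cg, hCgpos, hdec⟩ := hDecayGt hgt
    have hσ₁₂ : (0:ℝ) < σ₁ - σ₂ := by linarith
    have hσ₃1 : (0:ℝ) < σ₃ + 1 := by linarith
    have hσ₂1 : (0:ℝ) < σ₂ + 1 := by linarith
    have hσ₁1 : (0:ℝ) < σ₁ + 1 := by linarith
    set θ : ℝ := (σ₃ - σ₂) / (σ₁ - σ₂) with hθdef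
    set α : ℝ := 1 - (1 - θ) * (σ₂ + 1) / (σ₃ + 1) with hαdef
    have hθ : 0 < θ := div_pos (by linarith) hσ₁₂
    have hθ1 : θ < 1 := (div_lt_one hσ₁₂).mpr (by linarith)
    have h1θexp : 1 - θ = (σ₁ - σ₃) / (σ₁ - σ₂) := by
      rw [hθdef]; field_simp; ring
    have hα0 : 0 ≤ α := by
      rw [hαdef, sub_nonneg, h1θexp, div_mul_eq_mul_div, div_div,
        div_le_one (mul_pos hσ₁₂ hσ₃1)]
      nlinarith
    have hα1 : α ≤ 1 := by
      rw [hαdef]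
      have : 0 ≤ (1 - θ) * (σ₂ + 1) / (σ₃ + 1) :=
        div_nonneg (mul_nonneg (by linarith) (by linarith)) (by linarith)
      linarith
    have hKpos : 0 < Cg ^ α * c₀ ^ (1 - α) :=
      mul_pos (Real.rpow_pos_of_pos hCgpos _) (Real.rpow_pos_of_pos hc₀ _)
    refine ⟨1, one_pos, (Cg ^ α * c₀ ^ (1 - α)) ^ (1/θ), Real.rpow_pos_of_pos hKpos _,
      fun δ hδ => ⟨(1 - θ) * (θ/δ) ^ (θ/(1 - θ)),
        mul_pos (by linarith) (Real.rpow_pos_of_pos (div_pos hθ hδ) _), fun u hu => ?_⟩⟩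
    apply assemble σ₁ σ₂ σ₃ a ha.continuous haNonneg V
      (le_of_lt (mul_pos hδ one_pos))
      (le_of_lt (mul_pos hδ (Real.rpow_pos_of_pos hKpos _)))
      (le_of_lt (mul_pos (by linarith) (Real.rpow_pos_of_pos (div_pos hθ hδ) _)))
      hσ₁ hσ₂ _ u hu
    intro x s hs
    have hE : (1:ℝ) * θ ≤ α * ((σ₃+1)/(σ₁+1)) + 1 := by
      have h0 : 0 ≤ α * ((σ₃+1)/(σ₁+1)) :=
        mul_nonneg hα0 (div_nonneg (by linarith) (by linarith))
      linarith
    have hexp : (σ₃+1)/(σ₂+1) * (1 - α) = 1 - θ := by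
      rw [hαdef]; field_simp; ring
    have h := key (T := trapPart V x) (a := a x) (j := jb x) (s := s) (Cd := Cg) (c₀ := c₀)
      (E := (σ₃+1)/(σ₁+1)) (β := (σ₃+1)/(σ₂+1)) (θ := θ) (w := 1) (p := 2*σ₁+2)
      (q := 2*σ₂+2) (δ := δ) α
      (trapPart_nonneg V x) (haNonneg x) (jb_one_le x) hs hδ hCgpos.le hc₀.le hθ hθ1 hα0 hα1
      (hdec x) (hControl x) hE hexp (by linarith) (by linarith)
    have hrr : θ * (2*σ₁+2) + (1 - θ) * (2*σ₂+2) = 2*σ₃+2 := by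
      rw [hθdef]; field_simp; ring
    rw [hrr, Real.rpow_one] at h
    have t1 : 0 ≤ δ * 1 * (s ^ 2 / jb x ^ (7:ℕ)) :=
      mul_nonneg (by linarith) (div_nonneg (by positivity) (pow_nonneg (jb_pos x).le 7))
    linarith

end
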